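/- arXiv:1206.1897 — 2 statements merged into one kernel-verified Lean document; each statement's English description precedes it below -/
import Mathlib

section
/- Let D be a quasi-transitive digraph (i.e., 2-quasi-transitive) with a unique initial strong component C. If C has at least four vertices, then D has at least four 3-kings. If C has exactly three vertices, then every vertex of C is a 2-king of D. If C has one or two vertices, then every vertex of C is a 1-king of D. -/
/-!
In a quasi-transitive digraph a shortest path `x₀ → x₁ → ⋯ → x_k` has the back arcs
`x_{i+2} → x_i`, and for `k ≥ 4` also the arc `x_k → x₀`. Hence a vertex reaching a nonadjacent
vertex reaches it within distance `3`, and a vertex of the unique initial strong component `C`,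
which reaches every vertex, dominates every vertex outside `C`. For `|C| ≤ 3` this suffices,
since a path inside `C` has at most `|C| - 1` arcs.

Call `b` a semiking if all its neighbours are within distance `2` of `b`. Semikings of `C` and
their in-neighbours are `3`-kings. In a set closed under passing to in-neighbours with a larger
out-neighbourhood, a vertex of maximum out-degree is a semiking. Applied to `C`, to the
in-neighbours of the first semiking `b₁`, and to the common in-neighbours of `b₁` and `b₂`, this
yields semikings `b₁, b₂, b₃`, and a vertex of `C` entering `{b₁, b₂, b₃}` is a fourth `3`-king.
If `b₁` and `b₂` have no common in-neighbour, their remaining in-neighbours are `3`-kings; if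
there is only one of them, it is itself a semiking.
-/

variable {V : Type*}

/-- A directed path of length `n` from `u` to `v` in the digraph with arc relation `A`:
a sequence of `n + 1` pairwise distinct vertices, consecutive ones joined by arcs. -/
def HasPathN (A : V → V → Prop) (u v : V) (n : ℕ) : Prop :=
  ∃ f : Fin (n + 1) → V, Function.Injective f ∧ f 0 = u ∧ f (Fin.last n) = v ∧
    ∀ i : Fin n, A (f i.castSucc) (f i.succ)

/-- The distance from `u` to `v`: the length of a shortest directed path from `u` to `v`,
`⊤` if there is no such path. -/
noncomputable def ddist (A : V → V → Prop) (u v : V) : ℕ∞ :=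
  sInf {n : ℕ∞ | ∃ m : ℕ, n = (m : ℕ∞) ∧ HasPathN A u v m}

/-- `D` is `k`-quasi-transitive if for every directed path `(v_0, …, v_k)` of length `k`,
either `(v_0, v_k)` or `(v_k, v_0)` is an arc. -/
def KQuasiTrans (A : V → V → Prop) (k : ℕ) : Prop :=
  ∀ u v : V, HasPathN A u v k → A u v ∨ A v u

/-- A vertex `v` is an `r`-king if every vertex is within distance `r` from `v`. -/
def IsRKing (A : V → V → Prop) (r : ℕ) (v : V) : Prop :=
  ∀ u : V, ddist A v u ≤ (r : ℕ∞)

/-- `u` reaches `v` by a directed path. -/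
def Reaches (A : V → V → Prop) (u v : V) : Prop :=
  ∃ n : ℕ, HasPathN A u v n

/-- A strong component: the set of all vertices mutually reachable with some vertex. -/
def IsStrongComponent (A : V → V → Prop) (S : Set V) : Prop :=
  ∃ v : V, S = {u | Reaches A u v ∧ Reaches A v u}

/-- An initial strong component: a strong component receiving no arcs from outside. -/
def IsInitialStrongComponent (A : V → V → Prop) (S : Set V) : Prop :=
  IsStrongComponent A S ∧ ∀ u v : V, u ∉ S → v ∈ S → ¬ A u v

/-- The out-degree of `v` in `D`. -/
noncomputable def outDeg (A : V → V → Prop) (v : V) : ℕ :=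
  {u : V | A v u}.ncard

/-- The out-degree of `v` in the subdigraph of `D` induced by `C`. -/
noncomputable def outDegIn (A : V → V → Prop) (C : Set V) (v : V) : ℕ :=
  {u ∈ C | A v u}.ncard

/-- The maximum out-degree of the subdigraph induced by `C`. -/
noncomputable def maxOutDegIn (A : V → V → Prop) (C : Set V) : ℕ :=
  sSup (outDegIn A C '' C)

inductive HasWalk (A : V → V → Prop) : V → V → ℕ → Prop
  | nil (v : V) : HasWalk A v v 0
  | cons {u w v : V} {n : ℕ} : A u w → HasWalk A w v n → HasWalk A u v (n + 1)

section Walks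

variable {A : V → V → Prop}

namespace HasWalk

theorem trans {u v w : V} {m n : ℕ} (h₁ : HasWalk A u v m) (h₂ : HasWalk A v w n) :
    HasWalk A u w (m + n) := by
  induction h₁ with
  | nil => simpa using h₂
  | cons h _ ih => rw [Nat.add_right_comm]; exact .cons h (ih h₂)

theorem single {u v : V} (h : A u v) : HasWalk A u v 1 := .cons h (.nil v)

theorem exists_fun {u v : V} {n : ℕ} (h : HasWalk A u v n) :
    ∃ w : ℕ → V, w 0 = u ∧ w n = v ∧ ∀ i < n, A (w i) (w (i + 1)) := by
  induction h with
  | nil v => exact ⟨fun _ => v, rfl, rfl, fun i hi => absurd hi i.not_lt_zero⟩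
  | @cons u x v n hux _ ih =>
    obtain ⟨w, hw0, hwn, harc⟩ := ih
    refine ⟨fun | 0 => u | i + 1 => w i, rfl, hwn, ?_⟩
    rintro (_ | i) hi
    · simpa [hw0] using hux
    · exact harc i (by omega)

theorem exists_arc_into {T : Set V} {u v : V} {n : ℕ} (h : HasWalk A u v n) (hu : u ∉ T)
    (hv : v ∈ T) : ∃ x ∉ T, ∃ y ∈ T, A x y := by
  induction h with
  | nil => exact absurd hv hu
  | @cons u x v n hux _ ih =>
    by_cases hx : x ∈ T
    · exact ⟨u, hu, x, hx, hux⟩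
    · exact ih hx hv

end HasWalk

theorem hasWalk_of_arcs {w : ℕ → V} {n : ℕ} (harc : ∀ i < n, A (w i) (w (i + 1)))
    {i j : ℕ} (hij : i ≤ j) (hjn : j ≤ n) : HasWalk A (w i) (w j) (j - i) := by
  induction j, hij using Nat.le_induction with
  | base => simpa using HasWalk.nil (w i)
  | succ j hij ih =>
    rw [Nat.sub_add_comm hij]
    exact (ih (by omega)).trans (.single (harc j (by omega)))

theorem hasWalk_of_arcs_of_shortcut {w : ℕ → V} {n : ℕ} (harc : ∀ i < n, A (w i) (w (i + 1)))
    {i j m : ℕ} (hij : i ≤ j) (hjn : j ≤ n) (h : HasWalk A (w i) (w j) m) :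
    HasWalk A (w 0) (w n) (i + m + (n - j)) := by
  simpa using ((hasWalk_of_arcs harc (Nat.zero_le i) (hij.trans hjn)).trans h).trans
    (hasWalk_of_arcs harc hjn le_rfl)

theorem hasPathN_iff {u v : V} {n : ℕ} :
    HasPathN A u v n ↔ ∃ w : ℕ → V, w 0 = u ∧ w n = v ∧ (∀ i < n, A (w i) (w (i + 1))) ∧
      Set.InjOn w (Set.Iic n) := by
  constructor
  · rintro ⟨f, hinj, rfl, rfl, harc⟩
    refine ⟨fun i => f ⟨min i n, by omega⟩, by simp, by simp [Fin.last], fun i hi => ?_, ?_⟩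
    · simpa [Nat.min_eq_left hi.le, Nat.min_eq_left (Nat.succ_le_of_lt hi)] using harc ⟨i, hi⟩
    · intro i hi j hj hij
      simpa [Nat.min_eq_left (Set.mem_Iic.mp hi), Nat.min_eq_left (Set.mem_Iic.mp hj)]
        using hinj hij
  · rintro ⟨w, rfl, rfl, harc, hinj⟩
    refine ⟨fun i => w i, fun i j hij => Fin.ext (hinj (by simp; omega) (by simp; omega) hij),
      rfl, rfl, fun i => harc i i.isLt⟩

theorem HasPathN.hasWalk {u v : V} {n : ℕ} (h : HasPathN A u v n) : HasWalk A u v n := by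
  obtain ⟨w, rfl, rfl, harc, -⟩ := hasPathN_iff.mp h
  simpa using hasWalk_of_arcs harc (Nat.zero_le n) le_rfl

theorem HasWalk.exists_hasPathN {u v : V} {n : ℕ} (h : HasWalk A u v n) :
    ∃ m ≤ n, HasPathN A u v m := by
  induction n using Nat.strong_induction_on generalizing u v with
  | _ n ih =>
  obtain ⟨w, rfl, rfl, harc⟩ := h.exists_fun
  by_cases hinj : Set.InjOn w (Set.Iic n)
  · exact ⟨n, le_rfl, hasPathN_iff.mpr ⟨w, rfl, rfl, harc, hinj⟩⟩
  obtain ⟨i, j, hij, hjn, hw⟩ : ∃ i j, i < j ∧ j ≤ n ∧ w i = w j := by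
    simp only [Set.InjOn, Set.mem_Iic, not_forall] at hinj
    obtain ⟨i, hi, j, hj, hw, hne⟩ := hinj
    rcases Nat.lt_or_gt_of_ne hne with h | h
    exacts [⟨i, j, h, hj, hw⟩, ⟨j, i, h, hi, hw.symm⟩]
  have hshort := hasWalk_of_arcs_of_shortcut harc hij.le hjn (m := 0) (hw ▸ HasWalk.nil (w i))
  obtain ⟨m, hm, hpath⟩ := ih _ (by omega) hshort
  exact ⟨m, by omega, hpath⟩

theorem ddist_le_iff_hasWalk {u v : V} {n : ℕ} :
    ddist A u v ≤ n ↔ ∃ m ≤ n, HasWalk A u v m := by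
  constructor
  · intro h
    by_contra! hcon
    have : ((n + 1 : ℕ) : ℕ∞) ≤ ddist A u v := by
      refine le_sInf ?_
      rintro _ ⟨m, rfl, hm⟩
      exact_mod_cast not_le.mp fun hmn => hcon m hmn hm.hasWalk
    exact absurd (this.trans h) (by norm_cast; omega)
  · rintro ⟨m, hmn, hw⟩
    obtain ⟨k, hkm, hk⟩ := hw.exists_hasPathN
    have hk : ddist A u v ≤ k := sInf_le ⟨k, rfl, hk⟩
    exact hk.trans (by exact_mod_cast hkm.trans hmn)

theorem ddist_le_of_hasWalk {u v : V} {m n : ℕ} (h : HasWalk A u v m) (hmn : m ≤ n) :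
    ddist A u v ≤ n :=
  ddist_le_iff_hasWalk.mpr ⟨m, hmn, h⟩

theorem ddist_le_succ_of_arc {x u v : V} {n : ℕ} (hxu : A x u) (h : ddist A u v ≤ n) :
    ddist A x v ≤ (n + 1 : ℕ) := by
  obtain ⟨m, hmn, hw⟩ := ddist_le_iff_hasWalk.mp h
  exact ddist_le_of_hasWalk (.cons hxu hw) (by omega)

theorem reaches_iff_hasWalk {u v : V} : Reaches A u v ↔ ∃ n, HasWalk A u v n :=
  ⟨fun ⟨n, h⟩ => ⟨n, h.hasWalk⟩, fun ⟨_, h⟩ => (h.exists_hasPathN.imp fun _ => And.right)⟩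

theorem HasWalk.reaches {u v : V} {n : ℕ} (h : HasWalk A u v n) : Reaches A u v :=
  reaches_iff_hasWalk.mpr ⟨n, h⟩

theorem Reaches.refl (u : V) : Reaches A u u := (HasWalk.nil u).reaches

theorem Reaches.trans {u v w : V} (h₁ : Reaches A u v) (h₂ : Reaches A v w) : Reaches A u w := by
  obtain ⟨m, h₁⟩ := reaches_iff_hasWalk.mp h₁
  obtain ⟨n, h₂⟩ := reaches_iff_hasWalk.mp h₂
  exact (h₁.trans h₂).reaches

end Walks

theorem KQuasiTrans.adj_of_arc_arc {A : V → V → Prop} (hqt : KQuasiTrans A 2) {a b c : V}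
    (hab : A a b) (hbc : A b c) (hne_ab : a ≠ b) (hne_bc : b ≠ c) (hne_ac : a ≠ c) :
    A a c ∨ A c a := by
  refine hqt a c ⟨![a, b, c], ?_, rfl, rfl, ?_⟩
  · simp [Function.Injective, Fin.forall_fin_succ, hne_ab, hne_bc, hne_ac, hne_ab.symm,
      hne_bc.symm, hne_ac.symm]
  · simp [Fin.forall_fin_succ, hab, hbc]

structure IsGeodesic (A : V → V → Prop) (w : ℕ → V) (k : ℕ) : Prop where
  arc : ∀ i < k, A (w i) (w (i + 1))
  le_of_hasWalk : ∀ m, HasWalk A (w 0) (w k) m → k ≤ m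

section Geodesic

variable {A : V → V → Prop}

theorem Reaches.exists_isGeodesic {u v : V} (h : Reaches A u v) :
    ∃ w k, w 0 = u ∧ w k = v ∧ IsGeodesic A w k := by
  classical
  have hex := reaches_iff_hasWalk.mp h
  obtain ⟨w, hw0, hwk, harc⟩ := (Nat.find_spec hex).exists_fun
  refine ⟨w, Nat.find hex, hw0, hwk, harc, fun m hm => Nat.find_le ?_⟩
  rwa [hw0, hwk] at hm

namespace IsGeodesic

variable {w : ℕ → V} {k : ℕ} (hg : IsGeodesic A w k)
include hg

theorem hasWalk : HasWalk A (w 0) (w k) k := by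
  simpa using hasWalk_of_arcs hg.arc (Nat.zero_le k) le_rfl

theorem ne {i j : ℕ} (hij : i < j) (hjk : j ≤ k) : w i ≠ w j := fun h =>
  absurd (hg.le_of_hasWalk _ (hasWalk_of_arcs_of_shortcut hg.arc hij.le hjk (m := 0)
    (h ▸ HasWalk.nil (w i)))) (by omega)

theorem not_arc {i j : ℕ} (hij : i + 1 < j) (hjk : j ≤ k) : ¬A (w i) (w j) := fun h =>
  absurd (hg.le_of_hasWalk _ (hasWalk_of_arcs_of_shortcut hg.arc (by omega) hjk (.single h)))
    (by omega)

variable (hqt : KQuasiTrans A 2)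
include hqt

theorem arc_back {i : ℕ} (hik : i + 2 ≤ k) : A (w (i + 2)) (w i) :=
  (hqt.adj_of_arc_arc (hg.arc i (by omega)) (hg.arc (i + 1) (by omega))
    (hg.ne (by omega) (by omega)) (hg.ne (by omega) hik) (hg.ne (by omega) hik)).resolve_left (hg.not_arc (by omega) hik)

theorem arc_last_of_arc_last {j l : ℕ} (hkj : A (w k) (w j)) (hjl : A (w j) (w l)) (hjk : j < k)
    (hlk : l + 1 < k) (hne : j ≠ l) : A (w k) (w l) := by
  have hne_jl : w j ≠ w l := by
    rcases Nat.lt_or_gt_of_ne hne with h | h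
    exacts [hg.ne h (by omega), (hg.ne h hjk.le).symm]
  exact (hqt.adj_of_arc_arc hkj hjl (hg.ne hjk le_rfl).symm hne_jl (hg.ne (by omega) le_rfl).symm
    ).resolve_right (hg.not_arc hlk le_rfl)

/-- Starting from the back arc `w k → w (k - 2)`, quasi-transitivity pushes the tail `w k`
onto every earlier vertex: two steps back along back arcs, one step forward along the path. -/
theorem arc_last_first (hk : 4 ≤ k) : A (w k) (w 0) := by
  have hback : ∀ i, i + 2 < k → A (w k) (w (i + 2)) → A (w k) (w i) := fun i hi h =>
    hg.arc_last_of_arc_last hqt h (hg.arc_back hqt hi.le) hi (by omega) (by omega)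
  have htop : A (w k) (w (k - 2)) := by
    simpa [show k - 2 + 2 = k by omega] using hg.arc_back hqt (i := k - 2) (by omega)
  have htop' : A (w k) (w (k - 3)) := by
    have h4 : A (w k) (w (k - 4)) := hback _ (by omega) (by rwa [show k - 4 + 2 = k - 2 by omega])
    simpa [show k - 4 + 1 = k - 3 by omega] using
      hg.arc_last_of_arc_last hqt h4 (hg.arc (k - 4) (by omega)) (by omega) (by omega) (by omega)
  have hall : ∀ d i, i + 2 + d = k → A (w k) (w i) := by
    intro d
    induction d using Nat.strong_induction_on with
    | _ d ih =>
      intro i hi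
      match d, ih with
      | 0, _ => simpa [show i = k - 2 by omega] using htop
      | 1, _ => simpa [show i = k - 3 by omega] using htop'
      | d + 2, ih => exact hback i (by omega) (ih d (by omega) (i + 2) (by omega))
  exact hall (k - 2) 0 (by omega)

end IsGeodesic

variable (hqt : KQuasiTrans A 2)
include hqt

theorem KQuasiTrans.arc_or_reaches {x y : V} (h : Reaches A x y) : A x y ∨ Reaches A y x := by
  obtain ⟨w, k, rfl, rfl, hg⟩ := h.exists_isGeodesic
  match k, hg with
  | 0, _ => exact .inr (.refl _)
  | 1, hg => exact .inl (hg.arc 0 one_pos)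
  | 2, hg => exact .inr (HasWalk.single (hg.arc_back hqt (i := 0) le_rfl)).reaches
  | 3, hg =>
    exact .inr (HasWalk.cons (hg.arc_back hqt (i := 1) le_rfl) <| .cons (hg.arc 1 (by omega)) <|
      .single (hg.arc_back hqt (i := 0) (by omega))).reaches
  | k + 4, hg => exact .inr (HasWalk.single (hg.arc_last_first hqt (by omega))).reaches

theorem KQuasiTrans.ddist_le_three {x y : V} (h : Reaches A x y) (hxy : ¬A x y) (hyx : ¬A y x) :
    ddist A x y ≤ (3 : ℕ) := by
  obtain ⟨w, k, rfl, rfl, hg⟩ := h.exists_isGeodesic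
  match k, hg with
  | 0, hg | 3, hg => exact ddist_le_of_hasWalk hg.hasWalk (by omega)
  | 1, hg => exact absurd (hg.arc 0 one_pos) hxy
  | 2, hg => exact absurd (hg.arc_back hqt (i := 0) le_rfl) hyx
  | k + 4, hg => exact absurd (hg.arc_last_first hqt (by omega)) hyx

end Geodesic

section Components

variable {A : V → V → Prop} {C : Set V}

theorem IsStrongComponent.reaches (hC : IsStrongComponent A C) {u v : V} (hu : u ∈ C)
    (hv : v ∈ C) : Reaches A u v := by
  obtain ⟨c, rfl⟩ := hC
  exact hu.1.trans hv.2

theorem IsStrongComponent.mem_of_reaches (hC : IsStrongComponent A C) {u v : V} (hv : v ∈ C)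
    (huv : Reaches A u v) (hvu : Reaches A v u) : u ∈ C := by
  obtain ⟨c, rfl⟩ := hC
  exact ⟨huv.trans hv.1, hv.2.trans hvu⟩

theorem IsStrongComponent.exists_arc_into (hC : IsStrongComponent A C) {T : Set V} {w t : V}
    (hTC : T ⊆ C) (hw : w ∈ C) (hwT : w ∉ T) (ht : t ∈ T) : ∃ x ∉ T, ∃ y ∈ T, A x y := by
  obtain ⟨n, hwalk⟩ := reaches_iff_hasWalk.mp (hC.reaches hw (hTC ht))
  exact hwalk.exists_arc_into hwT ht

theorem IsInitialStrongComponent.mem_of_arc (hC : IsInitialStrongComponent A C) {x y : V}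
    (hxy : A x y) (hy : y ∈ C) : x ∈ C :=
  by_contra fun hx => hC.2 x y hx hy hxy

theorem IsInitialStrongComponent.exists_arc_to (hC : IsInitialStrongComponent A C) {v : V}
    (hv : v ∈ C) (hC2 : 2 ≤ C.ncard) : ∃ x ∈ C, A x v := by
  obtain ⟨u, hu, huv⟩ := Set.exists_ne_of_one_lt_ncard hC2 v
  obtain ⟨x, hx, y, rfl, hxy⟩ :=
    hC.1.exists_arc_into (Set.singleton_subset_iff.mpr hv) hu huv (Set.mem_singleton v)
  exact ⟨x, hC.mem_of_arc hxy hv, hxy⟩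

/-- Among the vertices reaching `u`, one with the largest reachable set reaches back everything
that reaches it; so its strong component is initial, hence is `C`. -/
theorem IsInitialStrongComponent.reaches_of_mem [Finite V] (hC : IsInitialStrongComponent A C)
    (huniq : ∀ S : Set V, IsInitialStrongComponent A S → S = C) {v : V} (hv : v ∈ C) (u : V) :
    Reaches A v u := by
  obtain ⟨a, hau, hmax⟩ := Set.exists_max_image {x | Reaches A x u}
    (fun x => {y | Reaches A x y}.ncard) (Set.toFinite _) ⟨u, .refl u⟩
  have hback : ∀ x, Reaches A x a → Reaches A a x := fun x hxa => by
    have hsub : {y | Reaches A a y} ⊆ {y | Reaches A x y} := fun y hay => hxa.trans hay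
    have heq := Set.eq_of_subset_of_ncard_le hsub (hmax x (hxa.trans hau))
    exact (Set.ext_iff.mp heq x).mpr (.refl x)
  have hinit : IsInitialStrongComponent A {z | Reaches A z a ∧ Reaches A a z} := by
    refine ⟨⟨a, rfl⟩, fun p q hp hq hpq => hp ?_⟩
    have hpa : Reaches A p a := (HasWalk.single hpq).reaches.trans hq.1
    exact ⟨hpa, hback p hpa⟩
  have haC : a ∈ C := huniq _ hinit ▸ ⟨.refl a, .refl a⟩
  exact (hC.1.reaches hv haC).trans hau

theorem IsInitialStrongComponent.arc_of_mem_of_notMem [Finite V]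
    (hC : IsInitialStrongComponent A C)
    (huniq : ∀ S : Set V, IsInitialStrongComponent A S → S = C) (hqt : KQuasiTrans A 2)
    {v u : V} (hv : v ∈ C) (hu : u ∉ C) : A v u :=
  (hqt.arc_or_reaches (hC.reaches_of_mem huniq hv u)).resolve_right fun huv =>
    hu (hC.1.mem_of_reaches hv huv (hC.reaches_of_mem huniq hv u))

theorem IsInitialStrongComponent.ddist_le_ncard_sub_one (hC : IsInitialStrongComponent A C)
    (hfin : C.Finite) {u v : V} (hu : u ∈ C) (hv : v ∈ C) :
    ddist A u v ≤ (C.ncard - 1 : ℕ) := by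
  obtain ⟨n, f, hinj, rfl, rfl, harc⟩ := hC.1.reaches hu hv
  have hrange : Set.range f ⊆ C := by
    rintro _ ⟨i, rfl⟩
    induction i using Fin.reverseInduction with
    | last => exact hv
    | cast i ih => exact hC.mem_of_arc (harc i) ih
  have hcard : n + 1 ≤ C.ncard := by
    simpa [Set.ncard_range_of_injective hinj] using Set.ncard_le_ncard hrange hfin
  exact ddist_le_iff_hasWalk.mpr ⟨n, by omega, HasPathN.hasWalk ⟨f, hinj, rfl, rfl, harc⟩⟩

end Components

theorem ne_of_arc {A : V → V → Prop} (hloop : ∀ v : V, ¬A v v) {x y : V} (h : A x y) : x ≠ y := by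
  rintro rfl
  exact hloop x h

def IsSemiKing (A : V → V → Prop) (b : V) : Prop :=
  ∀ u, A b u ∨ A u b → ddist A b u ≤ (2 : ℕ)

section SemiKings

variable {A : V → V → Prop} (hloop : ∀ v : V, ¬A v v) (hqt : KQuasiTrans A 2)
include hloop hqt

theorem arc_and_outNbrs_ssubset_of_not_ddist_le_two {b u : V} (hadj : A b u ∨ A u b)
    (hfar : ¬ddist A b u ≤ (2 : ℕ)) : A u b ∧ {z | A b z} ⊂ {z | A u z} := by
  have hbu : ¬A b u := fun h => hfar (ddist_le_of_hasWalk (.single h) (by omega))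
  have hub : A u b := hadj.resolve_left hbu
  refine ⟨hub, fun z hbz => ?_, fun hsub => hloop b (hsub hub)⟩
  have hzu : z ≠ u := by rintro rfl; exact hbu hbz
  refine (hqt.adj_of_arc_arc hub hbz (ne_of_arc hloop hub) (ne_of_arc hloop hbz)
    hzu.symm).resolve_right fun hzu' => hfar ?_
  exact ddist_le_of_hasWalk (.cons hbz (.single hzu')) le_rfl

theorem exists_isSemiKing_mem [Finite V] {S : Set V} (hS : S.Nonempty)
    (hclosed : ∀ b ∈ S, ∀ u, A u b → {z | A b z} ⊆ {z | A u z} → u ∈ S) :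
    ∃ b ∈ S, IsSemiKing A b := by
  obtain ⟨b, hbS, hmax⟩ := Set.exists_max_image S (outDeg A) (Set.toFinite S) hS
  refine ⟨b, hbS, fun u hadj => by_contra fun hfar => ?_⟩
  obtain ⟨hub, hssub⟩ := arc_and_outNbrs_ssubset_of_not_ddist_le_two hloop hqt hadj hfar
  exact (Set.ncard_lt_ncard hssub).not_ge (hmax u (hclosed b hbS u hub hssub.subset))

theorem isSemiKing_of_inNbrs_subset {x c d : V} (hxc : A x c) (hcd : A c d)
    (hin : ∀ u, A u c → u = d ∨ u = x) : IsSemiKing A x := by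
  intro u hadj
  rcases hadj with hxu | hux
  · exact ddist_le_of_hasWalk (.single hxu) (by omega)
  by_cases hcu : A c u
  · exact ddist_le_of_hasWalk (.cons hxc (.single hcu)) le_rfl
  by_cases huc : u = c
  · exact ddist_le_of_hasWalk (.single (huc ▸ hxc)) (by omega)
  have hux' : u ≠ x := ne_of_arc hloop hux
  rcases hqt.adj_of_arc_arc hux hxc hux' (ne_of_arc hloop hxc) huc with huc' | hcu'
  · rcases hin u huc' with rfl | rfl
    exacts [ddist_le_of_hasWalk (.cons hxc (.single hcd)) le_rfl, absurd rfl hux']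
  · exact absurd hcu' hcu

end SemiKings

section Kings

variable {A : V → V → Prop} (hqt : KQuasiTrans A 2)
include hqt

theorem IsSemiKing.isRKing_three {b : V} (hb : IsSemiKing A b) (hreach : ∀ u, Reaches A b u) :
    IsRKing A 3 b := by
  intro u
  by_cases hadj : A b u ∨ A u b
  · exact (hb u hadj).trans (by norm_num)
  · exact hqt.ddist_le_three (hreach u) (not_or.mp hadj).1 (not_or.mp hadj).2

theorem IsSemiKing.isRKing_three_of_arc (hloop : ∀ v : V, ¬A v v) {b x : V}
    (hb : IsSemiKing A b) (hxb : A x b) (hreach : ∀ u, Reaches A x u) : IsRKing A 3 x := by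
  intro u
  by_cases hbu : A b u ∨ A u b
  · exact ddist_le_succ_of_arc hxb (hb u hbu)
  by_cases hxu : A x u
  · exact ddist_le_of_hasWalk (.single hxu) (by omega)
  by_cases hux : A u x
  · by_cases hub : u = b
    · exact ddist_le_of_hasWalk (.single (hub ▸ hxb)) (by omega)
    exact absurd (hqt.adj_of_arc_arc hux hxb (ne_of_arc hloop hux)
      (ne_of_arc hloop hxb) hub).symm hbu
  exact hqt.ddist_le_three (hreach u) hxu hux

end Kings

theorem Set.four_le_ncard {α : Type*} [Finite α] {s : Set α} {a b c d : α}
    (h : ({a, b, c, d} : Set α) ⊆ s) (hab : a ≠ b) (hac : a ≠ c) (had : a ≠ d) (hbc : b ≠ c)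
    (hbd : b ≠ d) (hcd : c ≠ d) : 4 ≤ s.ncard := by
  have h4 : ({a, b, c, d} : Set α).ncard = 4 := by
    rw [Set.ncard_insert_of_notMem (by simp [hab, hac, had]),
      Set.ncard_insert_of_notMem (by simp [hbc, hbd]), Set.ncard_pair hcd]
  exact h4 ▸ Set.ncard_le_ncard h

section FourKings

variable [Finite V] {A : V → V → Prop} {C : Set V} (hloop : ∀ v : V, ¬A v v)
  (hqt : KQuasiTrans A 2) (hC : IsInitialStrongComponent A C)
  (huniq : ∀ S : Set V, IsInitialStrongComponent A S → S = C) (h4 : 4 ≤ C.ncard)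
include hloop hqt hC huniq h4

theorem four_le_ncard_isRKing_of_isSemiKing_triple {b₁ b₂ b₃ : V} (hb₁C : b₁ ∈ C)
    (hb₂C : b₂ ∈ C) (hb₃C : b₃ ∈ C) (hb₁ : IsSemiKing A b₁) (hb₂ : IsSemiKing A b₂)
    (hb₃ : IsSemiKing A b₃) (h₁₂ : b₁ ≠ b₂) (h₁₃ : b₁ ≠ b₃) (h₂₃ : b₂ ≠ b₃) :
    4 ≤ {v | IsRKing A 3 v}.ncard := by
  have hTC : ({b₁, b₂, b₃} : Set V) ⊆ C := by
    rintro _ (rfl | rfl | rfl) <;> assumption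
  obtain ⟨w, hwC, hwT⟩ := Set.exists_mem_notMem_of_ncard_lt_ncard
    (s := {b₁, b₂, b₃}) (t := C)
    (by rw [Set.ncard_eq_three.mpr ⟨_, _, _, h₁₂, h₁₃, h₂₃, rfl⟩]; omega)
  obtain ⟨p, hpT, q, hqT, hpq⟩ := hC.1.exists_arc_into hTC hwC hwT (Set.mem_insert b₁ _)
  have hq : IsSemiKing A q := by rcases hqT with rfl | rfl | rfl <;> assumption
  have hp := hq.isRKing_three_of_arc hqt hloop hpq
    (hC.reaches_of_mem huniq (hC.mem_of_arc hpq (hTC hqT)))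
  simp only [Set.mem_insert_iff, Set.mem_singleton_iff, not_or] at hpT
  refine Set.four_le_ncard (d := p) ?_ h₁₂ h₁₃ (Ne.symm hpT.1) h₂₃ (Ne.symm hpT.2.1)
    (Ne.symm hpT.2.2)
  rintro _ (rfl | rfl | rfl | rfl)
  · exact hb₁.isRKing_three hqt (hC.reaches_of_mem huniq hb₁C)
  · exact hb₂.isRKing_three hqt (hC.reaches_of_mem huniq hb₂C)
  · exact hb₃.isRKing_three hqt (hC.reaches_of_mem huniq hb₃C)
  · exact hp

theorem four_le_ncard_isRKing_of_corner {c d x : V} (hcC : c ∈ C) (hdC : d ∈ C)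
    (hc : IsSemiKing A c) (hd : IsSemiKing A d) (hcd : A c d) (hxc : A x c) (hxd : x ≠ d)
    (hin : ∀ u, A u c → u = d ∨ u = x) : 4 ≤ {v | IsRKing A 3 v}.ncard :=
  four_le_ncard_isRKing_of_isSemiKing_triple hloop hqt hC huniq h4 hcC hdC
    (hC.mem_of_arc hxc hcC) hc hd (isSemiKing_of_inNbrs_subset hloop hqt hxc hcd hin)
    (ne_of_arc hloop hcd) (ne_of_arc hloop hxc).symm hxd.symm

theorem four_le_ncard_isRKing_of_no_common_inNbr {b₁ b₂ : V} (hb₁C : b₁ ∈ C)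
    (hb₂C : b₂ ∈ C) (hb₁ : IsSemiKing A b₁) (hb₂ : IsSemiKing A b₂) (h₂₁ : A b₂ b₁)
    (hW : ∀ x, A x b₁ → ¬A x b₂) : 4 ≤ {v | IsRKing A 3 v}.ncard := by
  set N := {x | (A x b₁ ∨ A x b₂) ∧ x ≠ b₁ ∧ x ≠ b₂}
  rcases N.subsingleton_or_nontrivial with hN | ⟨x, hx, y, hy, hxy⟩
  · have hTC : ({b₁, b₂} : Set V) ⊆ C := by
      rintro _ (rfl | rfl) <;> assumption
    obtain ⟨w, hwC, hwT⟩ := Set.exists_mem_notMem_of_ncard_lt_ncard (s := {b₁, b₂}) (t := C)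
      ((Set.ncard_insert_le _ _).trans_lt (by rw [Set.ncard_singleton]; omega))
    obtain ⟨x, hxT, q, hqT, hxq⟩ := hC.1.exists_arc_into hTC hwC hwT (Set.mem_insert b₁ _)
    simp only [Set.mem_insert_iff, Set.mem_singleton_iff, not_or] at hxT hqT
    have hx : x ∈ N := ⟨by rcases hqT with rfl | rfl; exacts [.inl hxq, .inr hxq], hxT⟩
    have honly : ∀ u, A u b₁ ∨ A u b₂ → u = b₁ ∨ u = b₂ ∨ u = x := fun u hu => by
      by_contra! h
      exact h.2.2 (hN ⟨hu, h.1, h.2.1⟩ hx)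
    rcases hx.1 with hxb₁ | hxb₂
    · have h₁₂ : A b₁ b₂ := by
        obtain ⟨z, -, hz⟩ := hC.exists_arc_to hb₂C (by omega)
        rcases honly z (.inr hz) with rfl | rfl | rfl
        exacts [hz, absurd hz (hloop z), absurd hz (hW z hxb₁)]
      refine four_le_ncard_isRKing_of_corner hloop hqt hC huniq h4 hb₁C hb₂C hb₁ hb₂ h₁₂ hxb₁
        hx.2.2 fun u hu => ?_
      rcases honly u (.inl hu) with rfl | h | h
      exacts [absurd hu (hloop u), .inl h, .inr h]
    · refine four_le_ncard_isRKing_of_corner hloop hqt hC huniq h4 hb₂C hb₁C hb₂ hb₁ h₂₁ hxb₂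
        hx.2.1 fun u hu => ?_
      rcases honly u (.inr hu) with h | rfl | h
      exacts [.inl h, absurd hu (hloop u), .inr h]
  · have hking : ∀ z ∈ N, IsRKing A 3 z := by
      rintro z ⟨hz | hz, -⟩
      · exact hb₁.isRKing_three_of_arc hqt hloop hz
          (hC.reaches_of_mem huniq (hC.mem_of_arc hz hb₁C))
      · exact hb₂.isRKing_three_of_arc hqt hloop hz
          (hC.reaches_of_mem huniq (hC.mem_of_arc hz hb₂C))
    refine Set.four_le_ncard ?_ (ne_of_arc hloop h₂₁).symm hx.2.1.symm hy.2.1.symm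
      hx.2.2.symm hy.2.2.symm hxy
    rintro _ (rfl | rfl | rfl | rfl)
    · exact hb₁.isRKing_three hqt (hC.reaches_of_mem huniq hb₁C)
    · exact hb₂.isRKing_three hqt (hC.reaches_of_mem huniq hb₂C)
    · exact hking _ hx
    · exact hking _ hy

theorem four_le_ncard_isRKing : 4 ≤ {v | IsRKing A 3 v}.ncard := by
  have hCne : C.Nonempty := Set.nonempty_of_ncard_ne_zero (by omega)
  obtain ⟨b₁, hb₁C, hb₁⟩ :=
    exists_isSemiKing_mem hloop hqt hCne fun b hb u hub _ => hC.mem_of_arc hub hb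
  obtain ⟨x, -, hx⟩ := hC.exists_arc_to hb₁C (by omega)
  obtain ⟨b₂, hb₂₁, hb₂⟩ := exists_isSemiKing_mem hloop hqt (S := {x | A x b₁}) ⟨x, hx⟩
    fun b hb u _ hsub => hsub hb
  have hb₂C := hC.mem_of_arc hb₂₁ hb₁C
  by_cases hW : ∃ x, A x b₁ ∧ A x b₂
  · obtain ⟨b₃, ⟨hb₃₁, hb₃₂⟩, hb₃⟩ := exists_isSemiKing_mem hloop hqt
      (S := {x | A x b₁ ∧ A x b₂}) hW fun b hb u _ hsub => ⟨hsub hb.1, hsub hb.2⟩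
    exact four_le_ncard_isRKing_of_isSemiKing_triple hloop hqt hC huniq h4 hb₁C hb₂C
      (hC.mem_of_arc hb₃₁ hb₁C) hb₁ hb₂ hb₃ (ne_of_arc hloop hb₂₁).symm
      (ne_of_arc hloop hb₃₁).symm (ne_of_arc hloop hb₃₂).symm
  · exact four_le_ncard_isRKing_of_no_common_inNbr hloop hqt hC huniq h4 hb₁C hb₂C hb₁ hb₂
      hb₂₁ fun x h₁ h₂ => hW ⟨x, h₁, h₂⟩

end FourKings

theorem IsInitialStrongComponent.isRKing_of_ncard_le [Finite V] {A : V → V → Prop} {C : Set V}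
    (hC : IsInitialStrongComponent A C)
    (huniq : ∀ S : Set V, IsInitialStrongComponent A S → S = C) (hqt : KQuasiTrans A 2)
    {r : ℕ} (hr : 1 ≤ r) (hCr : C.ncard ≤ r + 1) {v : V} (hv : v ∈ C) : IsRKing A r v := by
  intro u
  by_cases hu : u ∈ C
  · exact (hC.ddist_le_ncard_sub_one C.toFinite hv hu).trans (by exact_mod_cast (by omega))
  · exact ddist_le_of_hasWalk (.single (hC.arc_of_mem_of_notMem huniq hqt hv hu)) hr

/-- quasi-transitive digraph with unique initial strong component `C`.
If `|C| ≥ 4` there are at least four `3`-kings; if `|C| = 3` every vertex of `C` is a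
`2`-king; if `|C| ∈ {1,2}` every vertex of `C` is a `1`-king. -/
theorem qt_number_of_three_kings
    [Fintype V] (A : V → V → Prop) (hloop : ∀ v : V, ¬ A v v)
    (hqt : KQuasiTrans A 2)
    (C : Set V) (hC : IsInitialStrongComponent A C)
    (huniq : ∀ S : Set V, IsInitialStrongComponent A S → S = C) :
    (4 ≤ C.ncard → 4 ≤ {v : V | IsRKing A 3 v}.ncard) ∧
    (C.ncard = 3 → ∀ v ∈ C, IsRKing A 2 v) ∧
    (C.ncard = 1 ∨ C.ncard = 2 → ∀ v ∈ C, IsRKing A 1 v) :=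
  ⟨four_le_ncard_isRKing hloop hqt hC huniq,
    fun h3 _ hv => hC.isRKing_of_ncard_le huniq hqt (by norm_num) h3.le hv,
    fun h12 _ hv => hC.isRKing_of_ncard_le huniq hqt le_rfl (by omega) hv⟩
end

section
/- Let k ≥ 2 be an even integer and let D be a k-quasi-transitive digraph. If P = (u = u_0, u_1, …, u_{k+1}, u_{k+2} = v) is a directed path in D of minimum length from u to v, i.e., d(u,v) = k+2, then d⁺(v) ≥ d⁺(u) + k. -/
variable {V : Type*}

/-!
Let `u_0 → ⋯ → u_{k+2} = v` be the geodesic. Minimality forbids every forward chord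
`u_i → u_j` with `j ≥ i + 2`, so `k`-quasi-transitivity applied to `(u_0, …, u_k)` gives
the arc `u_k → u_0`: the vertices `u_0, …, u_k` form a cycle `C` of odd length `k + 1`.
Applied to `(u_2, …, u_{k+2})` it gives `v → u_2`. If `v → u_s`, then `v` followed by
`k - 1` steps along `C` is a path of length `k` ending at `u_{s-2}` (indices mod `k + 1`),
and the arc cannot point back to `v`; hence `v → u_{s-2}`, and as `k + 1` is odd, `v`
dominates all of `C`. An out-neighbour `w ≠ u_1` of `u_0` lies off the geodesic, and the
path `(v, u_3, …, u_k, u_0, w)` forces `v → w`, since `w → v` would give a path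
`(u_0, w, v)` of length `2`. So the out-neighbourhood of `v` contains that of `u_0`
together with the `k` vertices `u_0, u_2, …, u_k`, none of which is an out-neighbour of `u_0`.
-/

def IsPathUpTo (A : V → V → Prop) (g : ℕ → V) (n : ℕ) : Prop :=
  Set.InjOn g (Set.Iic n) ∧ ∀ i < n, A (g i) (g (i + 1))

def seqCons (x : V) (g : ℕ → V) : ℕ → V
  | 0 => x
  | i + 1 => g i

lemma ddist_le_of_hasPathN {A : V → V → Prop} {u v : V} {m : ℕ} (h : HasPathN A u v m) :
    ddist A u v ≤ m :=
  sInf_le ⟨m, rfl, h⟩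

namespace IsPathUpTo

variable {A : V → V → Prop} {g : ℕ → V} {n : ℕ}

lemma hasPathN (hg : IsPathUpTo A g n) : HasPathN A (g 0) (g n) n := by
  refine ⟨fun i => g i, fun i j h => ?_, rfl, rfl, fun i => hg.2 i i.isLt⟩
  exact Fin.ext <| hg.1 (Set.mem_Iic.2 (Nat.lt_succ_iff.1 i.isLt))
    (Set.mem_Iic.2 (Nat.lt_succ_iff.1 j.isLt)) h

lemma ne_of_lt (hg : IsPathUpTo A g n) {i j : ℕ} (hij : i < j) (hj : j ≤ n) : g i ≠ g j :=
  fun h => hij.ne (hg.1 (Set.mem_Iic.2 (by omega)) (Set.mem_Iic.2 hj) h)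

lemma mono (hg : IsPathUpTo A g n) {m : ℕ} (hm : m ≤ n) : IsPathUpTo A g m :=
  ⟨hg.1.mono (Set.Iic_subset_Iic.2 hm), fun i hi => hg.2 i (by omega)⟩

lemma shift (hg : IsPathUpTo A g n) {a m : ℕ} (h : a + m ≤ n) :
    IsPathUpTo A (fun t => g (a + t)) m := by
  refine ⟨fun i hi j hj hij => ?_, fun i hi => hg.2 (a + i) (by omega)⟩
  simp only [Set.mem_Iic] at hi hj
  have := hg.1 (Set.mem_Iic.2 (by omega)) (Set.mem_Iic.2 (by omega)) hij
  omega

lemma cons (hg : IsPathUpTo A g n) {x : V} (hx : ∀ i ≤ n, g i ≠ x) (hxg : A x (g 0)) :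
    IsPathUpTo A (seqCons x g) (n + 1) := by
  refine ⟨fun i hi j hj hij => ?_, fun i hi => ?_⟩
  · simp only [Set.mem_Iic] at hi hj
    match i, j with
    | 0, 0 => rfl
    | 0, j + 1 => exact absurd hij.symm (hx j (by omega))
    | i + 1, 0 => exact absurd hij (hx i (by omega))
    | i + 1, j + 1 => rw [hg.1 (Set.mem_Iic.2 (by omega)) (Set.mem_Iic.2 (by omega)) hij]
  · cases i with
    | zero => exact hxg
    | succ i => exact hg.2 i (by omega)

lemma snoc (hg : IsPathUpTo A g n) {y : V} (hy : ∀ i ≤ n, g i ≠ y) (hgy : A (g n) y) :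
    IsPathUpTo A (Function.update g (n + 1) y) (n + 1) := by
  refine ⟨fun i hi j hj hij => ?_, fun i hi => ?_⟩
  · simp only [Set.mem_Iic, Function.update_apply] at hi hj hij
    split_ifs at hij
    · omega
    · exact absurd hij.symm (hy j (by omega))
    · exact absurd hij (hy i (by omega))
    · exact hg.1 (Set.mem_Iic.2 (by omega)) (Set.mem_Iic.2 (by omega)) hij
  · rcases Nat.lt_or_ge i n with hin | hin
    · rw [Function.update_of_ne (by omega), Function.update_of_ne (by omega)]
      exact hg.2 i hin
    · obtain rfl : i = n := by omega
      rw [Function.update_of_ne (by omega), Function.update_self]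
      exact hgy

lemma shortcut (hg : IsPathUpTo A g n) {i j : ℕ} (hij : i < j) (hj : j ≤ n)
    (hA : A (g i) (g j)) :
    IsPathUpTo A (fun t => if t ≤ i then g t else g (t + (j - i - 1))) (n - (j - i - 1)) := by
  refine ⟨fun a ha b hb hab => ?_, fun t ht => ?_⟩
  · simp only [Set.mem_Iic] at ha hb hab
    split_ifs at hab <;>
      have := hg.1 (Set.mem_Iic.2 (by omega)) (Set.mem_Iic.2 (by omega)) hab <;> omega
  · dsimp only
    rcases lt_trichotomy t i with hti | rfl | hti
    · rw [if_pos hti.le, if_pos (by omega : t + 1 ≤ i)]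
      exact hg.2 t (by omega)
    · rw [if_pos le_rfl, if_neg (by omega), show t + 1 + (j - t - 1) = j by omega]
      exact hA
    · rw [if_neg (by omega), if_neg (by omega),
        show t + 1 + (j - i - 1) = t + (j - i - 1) + 1 by omega]
      exact hg.2 _ (by omega)

lemma arc_mod (hg : IsPathUpTo A g n) (hclose : A (g n) (g 0)) (j : ℕ) :
    A (g (j % (n + 1))) (g ((j + 1) % (n + 1))) := by
  rcases Nat.lt_or_ge (j % (n + 1)) n with h | h
  · have hsucc : (j + 1) % (n + 1) = j % (n + 1) + 1 := by
      rw [Nat.add_mod, Nat.mod_eq_of_lt (a := 1) (by omega)]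
      exact Nat.mod_eq_of_lt (by omega)
    rw [hsucc]
    exact hg.2 _ h
  · have hn : j % (n + 1) = n := by have := Nat.mod_lt j (show 0 < n + 1 by omega); omega
    rwa [Nat.succ_mod_succ_eq_zero_iff.2 hn, hn]

lemma rotate (hg : IsPathUpTo A g n) (hclose : A (g n) (g 0)) (s : ℕ) {m : ℕ} (hm : m ≤ n) :
    IsPathUpTo A (fun t => g ((s + t) % (n + 1))) m := by
  refine ⟨fun i hi j hj hij => ?_, fun i _ => hg.arc_mod hclose (s + i)⟩
  simp only [Set.mem_Iic] at hi hj
  have hmod := hg.1 (Set.mem_Iic.2 (Nat.lt_succ_iff.1 (Nat.mod_lt _ (show 0 < n + 1 by omega))))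
    (Set.mem_Iic.2 (Nat.lt_succ_iff.1 (Nat.mod_lt _ (show 0 < n + 1 by omega)))) hij
  have := Nat.ModEq.add_left_cancel' s hmod
  rwa [Nat.ModEq, Nat.mod_eq_of_lt (by omega), Nat.mod_eq_of_lt (by omega)] at this

end IsPathUpTo

open Fin.NatCast in
lemma hasPathN_iff_exists_isPathUpTo {A : V → V → Prop} {u v : V} {n : ℕ} :
    HasPathN A u v n ↔ ∃ g : ℕ → V, IsPathUpTo A g n ∧ g 0 = u ∧ g n = v := by
  constructor
  · rintro ⟨f, hinj, rfl, rfl, harc⟩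
    refine ⟨fun i => f i, ⟨fun i hi j hj hij => ?_, fun i hi => ?_⟩, by simp, by simp⟩
    · simp only [Set.mem_Iic] at hi hj
      simpa [Fin.ext_iff, Nat.mod_eq_of_lt (Nat.lt_succ_of_le hi),
        Nat.mod_eq_of_lt (Nat.lt_succ_of_le hj)] using hinj hij
    · convert harc ⟨i, hi⟩ using 2 <;> ext <;> simp [Fin.val_add] <;> omega
  · rintro ⟨g, hg, rfl, rfl⟩
    exact hg.hasPathN

def IsGeodesic_s18 (A : V → V → Prop) (U : ℕ → V) (n : ℕ) : Prop :=
  IsPathUpTo A U n ∧ ∀ m, HasPathN A (U 0) (U n) m → n ≤ m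

namespace IsGeodesic_s18

variable {A : V → V → Prop} {U : ℕ → V} {n k : ℕ}

lemma not_arc_s18 (hG : IsGeodesic_s18 A U n) {i j : ℕ} (hij : i + 2 ≤ j) (hj : j ≤ n) :
    ¬ A (U i) (U j) := by
  intro hA
  have hpath := (hG.1.shortcut (by omega) hj hA).hasPathN
  simp only [if_pos (Nat.zero_le i), if_neg (show ¬ n - (j - i - 1) ≤ i by omega),
    show n - (j - i - 1) + (j - i - 1) = n by omega] at hpath
  have := hG.2 _ hpath
  omega

lemma not_arc_zero_of_ne_one (hloop : ∀ v : V, ¬ A v v) (hG : IsGeodesic_s18 A U n) {i : ℕ}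
    (hi : i ≤ n) (hi1 : i ≠ 1) : ¬ A (U 0) (U i) := by
  rcases Nat.lt_or_ge i 2 with h | h
  · obtain rfl : i = 0 := by omega
    exact hloop _
  · exact hG.not_arc_s18 (by omega) hi

lemma not_arc_last_of_arc_zero (hG : IsGeodesic_s18 A U n) (hn : 3 ≤ n) {w : V}
    (hw : A (U 0) w) : ¬ A w (U n) := by
  intro hwn
  have hw0 : U 0 ≠ w := fun h => hG.not_arc_s18 (by omega) le_rfl (h ▸ hwn)
  have hwn' : w ≠ U n := fun h => hG.not_arc_s18 (by omega) le_rfl (h ▸ hw)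
  have h0n : U 0 ≠ U n := hG.1.ne_of_lt (by omega) le_rfl
  have hg : IsPathUpTo A (seqCons (U 0) (seqCons w fun _ => U n)) 2 := by
    refine IsPathUpTo.cons (IsPathUpTo.cons ⟨?_, ?_⟩ ?_ hwn) ?_ hw
    · intro a ha b hb _
      simp only [Set.mem_Iic, nonpos_iff_eq_zero] at ha hb
      rw [ha, hb]
    · exact fun i hi => absurd hi (Nat.not_lt_zero i)
    · exact fun _ _ => hwn'.symm
    · intro i hi
      interval_cases i
      exacts [hw0.symm, h0n.symm]
  have := hG.2 2 hg.hasPathN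
  omega

lemma arc_closing (hG : IsGeodesic_s18 A U (k + 2)) (hqt : KQuasiTrans A k) (hk : 2 ≤ k) :
    A (U k) (U 0) :=
  (hqt _ _ (hG.1.mono (by omega)).hasPathN).resolve_left (hG.not_arc_s18 (by omega) (by omega))

lemma arc_last_two (hG : IsGeodesic_s18 A U (k + 2)) (hqt : KQuasiTrans A k) (hk : 2 ≤ k) :
    A (U (k + 2)) (U 2) := by
  have hpath := (hG.1.shift (a := 2) (m := k) (by omega)).hasPathN
  simp only [add_zero, add_comm 2 k] at hpath
  exact (hqt _ _ hpath).resolve_left (hG.not_arc_s18 (by omega) le_rfl)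

lemma mod_ne_last (hG : IsGeodesic_s18 A U (k + 2)) (j : ℕ) : U (j % (k + 1)) ≠ U (k + 2) :=
  hG.1.ne_of_lt (by have := Nat.mod_lt j (by omega : 0 < k + 1); omega) le_rfl

lemma arc_last_mod_step (hG : IsGeodesic_s18 A U (k + 2)) (hqt : KQuasiTrans A k) (hk : 2 ≤ k)
    {s : ℕ} (hs : A (U (k + 2)) (U (s % (k + 1)))) :
    A (U (k + 2)) (U ((s + (k - 1)) % (k + 1))) := by
  have hcyc := (hG.1.mono (by omega)).rotate (hG.arc_closing hqt hk) s (m := k - 1) (by omega)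
  have hpath : HasPathN A (U (k + 2)) (U ((s + (k - 1)) % (k + 1))) (k - 1 + 1) :=
    (hcyc.cons (fun i _ => hG.mod_ne_last _) hs).hasPathN
  rw [show k - 1 + 1 = k by omega] at hpath
  have hlt := Nat.mod_lt (s + (k - 1)) (show 0 < k + 1 by omega)
  exact (hqt _ _ hpath).resolve_right (hG.not_arc_s18 (by omega) le_rfl)

lemma arc_last_of_le (hG : IsGeodesic_s18 A U (k + 2)) (hqt : KQuasiTrans A k) (hk : 2 ≤ k)
    (hke : Even k) {i : ℕ} (hi : i ≤ k) : A (U (k + 2)) (U i) := by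
  let P : ℕ → Prop := fun j => A (U (k + 2)) (U (j % (k + 1)))
  have hdown : ∀ j, P (j + 2) → P j := fun j h => by
    have := hG.arc_last_mod_step hqt hk h
    rwa [show j + 2 + (k - 1) = j + (k + 1) by omega, Nat.add_mod_right] at this
  have hdesc : ∀ d j, P (j + 2 * d) → P j := by
    intro d
    induction d with
    | zero => exact fun j h => h
    | succ d ih => exact fun j h => ih j (hdown _ (by rwa [mul_add_one, ← add_assoc] at h))
  have htop : ∀ m, P (2 + (k + 1) * m) := fun m => by
    simp only [P, Nat.add_mul_mod_self_left, Nat.mod_eq_of_lt (show 2 < k + 1 by omega)]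
    exact hG.arc_last_two hqt hk
  have hPi : P i := by
    obtain ⟨r, rfl⟩ := hke
    rcases Nat.even_or_odd i with ⟨a, rfl⟩ | ⟨a, rfl⟩
    · have h := htop 2
      rw [show 2 + (r + r + 1) * 2 = a + a + 2 * (2 * r + 2 - a) by omega] at h
      exact hdesc _ _ h
    · have h := htop 1
      rw [show 2 + (r + r + 1) * 1 = 2 * a + 1 + 2 * (r + 1 - a) by omega] at h
      exact hdesc _ _ h
  simpa [P, Nat.mod_eq_of_lt (show i < k + 1 by omega)] using hPi

lemma arc_last_of_arc_zero (hloop : ∀ v : V, ¬ A v v) (hG : IsGeodesic_s18 A U (k + 2))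
    (hqt : KQuasiTrans A k) (hk : 2 ≤ k) (hke : Even k) {w : V} (hw : A (U 0) w)
    (hw1 : w ≠ U 1) : A (U (k + 2)) w := by
  have hcyc := (hG.1.mono (by omega)).rotate (hG.arc_closing hqt hk) 3 (m := k - 2) (by omega)
  have hend : U ((3 + (k - 2)) % (k + 1)) = U 0 := by
    rw [show 3 + (k - 2) = k + 1 by omega, Nat.mod_self]
  have hw_off : ∀ j, U (j % (k + 1)) ≠ w := fun j h => by
    have := Nat.mod_lt j (show 0 < k + 1 by omega)
    exact hG.not_arc_zero_of_ne_one hloop (i := j % (k + 1)) (by omega)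
      (fun h1 => hw1 (h1 ▸ h.symm)) (h ▸ hw)
  have hw_ne : w ≠ U (k + 2) := fun h => hG.not_arc_s18 (by omega) le_rfl (h ▸ hw)
  have hext := hcyc.snoc (fun i _ => hw_off _) (hend ▸ hw)
  have hpath : HasPathN A (U (k + 2)) w (k - 2 + 1 + 1) := by
    refine hasPathN_iff_exists_isPathUpTo.2 ⟨_, hext.cons (fun i _ => ?_) ?_, rfl, ?_⟩
    · rw [Function.update_apply]
      split_ifs
      exacts [hw_ne, hG.mod_ne_last _]
    · rw [Function.update_of_ne (by omega)]
      exact hG.arc_last_of_le hqt hk hke (Nat.lt_succ_iff.1 (Nat.mod_lt _ (by omega)))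
    · simp [seqCons]
  rw [show k - 2 + 1 + 1 = k by omega] at hpath
  exact (hqt _ _ hpath).resolve_right (hG.not_arc_last_of_arc_zero (by omega) hw)

end IsGeodesic_s18

lemma outDeg_add_ncard_le [Finite V] {A : V → V → Prop} {u v : V} {T : Set V}
    (hsub : ∀ x, A u x → A v x) (hT : ∀ x ∈ T, A v x) (hdisj : ∀ x ∈ T, ¬ A u x) :
    outDeg A u + T.ncard ≤ outDeg A v :=
  calc outDeg A u + T.ncard = ({x | A u x} ∪ T).ncard :=
        (Set.ncard_union_eq (Set.disjoint_left.2 fun x hx hxT => hdisj x hxT hx)).symm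
    _ ≤ outDeg A v := Set.ncard_le_ncard (Set.union_subset hsub hT)

/-- even `k ≥ 2`; if `(u = u_0, …, u_{k+2} = v)` is a shortest path (so
`d(u, v) = k+2`), then `d⁺(v) ≥ d⁺(u) + k`. -/
theorem kqt_even_degree_jump
    [Fintype V] (A : V → V → Prop) (hloop : ∀ v : V, ¬ A v v)
    (k : ℕ) (hk : 2 ≤ k) (hke : Even k) (hqt : KQuasiTrans A k)
    (f : Fin (k + 3) → V) (hinj : Function.Injective f)
    (harc : ∀ i : Fin (k + 2), A (f i.castSucc) (f i.succ))
    (hdist : ddist A (f 0) (f (Fin.last (k + 2))) = ((k : ℕ∞) + 2)) :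
    outDeg A (f 0) + k ≤ outDeg A (f (Fin.last (k + 2))) := by
  obtain ⟨U, hP, hU0, hUn⟩ := hasPathN_iff_exists_isPathUpTo.1 ⟨f, hinj, rfl, rfl, harc⟩
  have hG : IsGeodesic_s18 A U (k + 2) := ⟨hP, fun m hm => by
    have := ddist_le_of_hasPathN (hU0 ▸ hUn ▸ hm)
    rw [hdist] at this
    exact_mod_cast this⟩
  have hT : (U '' (Set.Iic k \ {1})).ncard = k := by
    rw [(hP.1.mono (Set.sdiff_subset.trans (Set.Iic_subset_Iic.2 (by omega)))).ncard_image,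
      Set.ncard_sdiff_singleton_of_mem (by simp; omega), Set.ncard_Iic_nat, Nat.add_sub_cancel]
  rw [← hU0, ← hUn]
  calc outDeg A (U 0) + k = outDeg A (U 0) + (U '' (Set.Iic k \ {1})).ncard := by rw [hT]
    _ ≤ outDeg A (U (k + 2)) := by
      refine outDeg_add_ncard_le (fun w hw => ?_) ?_ ?_
      · by_cases hw1 : w = U 1
        · exact hw1 ▸ hG.arc_last_of_le hqt hk hke (by omega)
        · exact hG.arc_last_of_arc_zero hloop hqt hk hke hw hw1
      · rintro _ ⟨i, ⟨hi, -⟩, rfl⟩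
        exact hG.arc_last_of_le hqt hk hke hi
      · rintro _ ⟨i, ⟨hi, hi1⟩, rfl⟩
        exact hG.not_arc_zero_of_ne_one hloop (Nat.le_add_right_of_le hi) hi1
end
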